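/- Lemma 3.3 (per-edge characterization of discrete conformal vector fields, hyperbolic case). Let γ_i, γ_j : ℝ → ℝ³ be curves with γ_i(t) ∈ ℍ² and γ_j(t) ∈ ℍ² for all t, differentiable at t = 0 with derivatives ξ_i := γ_i′(0) and ξ_j := γ_j′(0). Set p_i := γ_i(0), p_j := γ_j(0), assume p_i ≠ p_j, set λ_0 := arcosh(−⟨p_i,p_j⟩_M), and let u_i, u_j ∈ ℝ. Then the hyperbolic edge length function t ↦ arcosh(−⟨γ_i(t), γ_j(t)⟩_M) has derivative (u_i + u_j)·tanh(λ_0/2) at t = 0 if and only if ⟨ξ_j − ξ_i, p_j − p_i⟩_M = ((u_i + u_j)/2)·⟨p_j − p_i, p_j − p_i⟩_M. -/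

import Mathlib

noncomputable section

/-- Minkowski inner product on `ℝ³` (signature `(−,+,+)`). -/
def mink (x y : Fin 3 → ℝ) : ℝ := -(x 0 * y 0) + x 1 * y 1 + x 2 * y 2

/-- The hyperboloid model of the hyperbolic plane. -/
def inH2 (x : Fin 3 → ℝ) : Prop := mink x x = -1 ∧ 0 < x 0

/-- Inverse hyperbolic cosine. -/
def arcosh (x : ℝ) : ℝ := Real.log (x + Real.sqrt (x ^ 2 - 1))

/-! Along an edge `t ↦ (γᵢ t, γⱼ t)` put `c := -⟨γᵢ, γⱼ⟩_M`, so that the length is `arcosh c`.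
Since each `ξ` is Minkowski-orthogonal to its base point, `c' = ⟨ξⱼ - ξᵢ, pⱼ - pᵢ⟩_M`; moreover
`⟨pⱼ - pᵢ, pⱼ - pᵢ⟩_M = 2 (c - 1)`. With `arcosh' c = 1 / √(c² - 1)` and
`tanh (arcosh c / 2) = (c - 1) / √(c² - 1)`, both sides of the equivalence say `c' = (uᵢ + uⱼ)(c - 1)`. -/

theorem arcosh_eq_real_arcosh : arcosh = Real.arcosh := rfl

namespace Real

theorem tanh_half (y : ℝ) : tanh (y / 2) = (cosh y - 1) / sinh y := by
  conv_rhs => rw [← mul_div_cancel₀ y (two_ne_zero' ℝ), cosh_two_mul, sinh_two_mul, cosh_sq']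
  rw [tanh_eq_sinh_div_cosh]
  have hcosh := cosh_pos (y / 2)
  -- At `sinh y = 0` both sides vanish, the right one because `x / 0 = 0`.
  rcases eq_or_ne (sinh (y / 2)) 0 with h | h
  · simp [h]
  · field_simp
    ring

theorem tanh_half_arcosh {x : ℝ} (hx : 1 ≤ x) :
    tanh (arcosh x / 2) = (x - 1) / √(x ^ 2 - 1) := by
  rw [tanh_half, cosh_arcosh hx, sinh_arcosh hx]

end Real

theorem mink_comm (x y : Fin 3 → ℝ) : mink x y = mink y x := by
  simp only [mink]
  ring

theorem mink_sub_left (x y z : Fin 3 → ℝ) : mink (x - y) z = mink x z - mink y z := by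
  simp only [mink, Pi.sub_apply]
  ring

theorem mink_sub_right (x y z : Fin 3 → ℝ) : mink x (y - z) = mink x y - mink x z := by
  rw [mink_comm, mink_sub_left, mink_comm y, mink_comm z]

theorem HasDerivAt.mink {f g : ℝ → Fin 3 → ℝ} {f' g' : Fin 3 → ℝ} {t : ℝ}
    (hf : HasDerivAt f f' t) (hg : HasDerivAt g g' t) :
    HasDerivAt (fun s => mink (f s) (g s)) (mink f' (g t) + mink (f t) g') t := by
  have hfi (i : Fin 3) : HasDerivAt (fun s => f s i) (f' i) t := hasDerivAt_pi.mp hf i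
  have hgi (i : Fin 3) : HasDerivAt (fun s => g s i) (g' i) t := hasDerivAt_pi.mp hg i
  refine ((((hfi 0).mul (hgi 0)).neg.add ((hfi 1).mul (hgi 1))).add
    ((hfi 2).mul (hgi 2))).congr_deriv ?_
  simp only [_root_.mink]
  ring

theorem mink_sub_self_of_inH2 {p q : Fin 3 → ℝ} (hp : inH2 p) (hq : inH2 q) :
    mink (q - p) (q - p) = 2 * (-mink p q - 1) := by
  rw [mink_sub_left, mink_sub_right, mink_sub_right, hp.1, hq.1, mink_comm q p]
  ring

theorem one_lt_neg_mink_of_inH2 {p q : Fin 3 → ℝ} (hp : inH2 p) (hq : inH2 q) (hne : p ≠ q) :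
    1 < -mink p q := by
  obtain ⟨hpp, hp0⟩ := hp
  obtain ⟨hqq, hq0⟩ := hq
  simp only [mink] at hpp hqq ⊢
  by_contra! hle
  -- Lagrange's identity: `(p₀q₀)² - (1 + p₁q₁ + p₂q₂)²` is a sum of three squares.
  have hsq : (p 1 - q 1) ^ 2 + (p 2 - q 2) ^ 2 + (p 1 * q 2 - p 2 * q 1) ^ 2 ≤ 0 := by
    nlinarith [mul_pos hp0 hq0]
  have h1 : p 1 = q 1 := by nlinarith [sq_nonneg (p 2 - q 2), sq_nonneg (p 1 * q 2 - p 2 * q 1)]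
  have h2 : p 2 = q 2 := by nlinarith [sq_nonneg (p 1 - q 1), sq_nonneg (p 1 * q 2 - p 2 * q 1)]
  have h0 : p 0 = q 0 := (pow_left_inj₀ hp0.le hq0.le two_ne_zero).mp (by
    rw [← h1, ← h2] at hqq
    linarith)
  exact hne (funext fun i => by fin_cases i <;> assumption)

theorem mink_eq_zero_of_hasDerivAt_of_inH2 {γ : ℝ → Fin 3 → ℝ} {ξ : Fin 3 → ℝ} {t : ℝ}
    (hγ : ∀ s, inH2 (γ s)) (hd : HasDerivAt γ ξ t) : mink (γ t) ξ = 0 := by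
  have hconst : HasDerivAt (fun s => mink (γ s) (γ s)) 0 t := by
    simpa only [fun s => (hγ s).1] using hasDerivAt_const t (-1 : ℝ)
  have hsum := (hd.mink hd).unique hconst
  rw [mink_comm ξ] at hsum
  linarith

theorem hasDerivAt_neg_mink_of_inH2 {γi γj : ℝ → Fin 3 → ℝ} {ξi ξj : Fin 3 → ℝ} {t : ℝ}
    (hγi : ∀ s, inH2 (γi s)) (hγj : ∀ s, inH2 (γj s))
    (hdi : HasDerivAt γi ξi t) (hdj : HasDerivAt γj ξj t) :
    HasDerivAt (fun s => -mink (γi s) (γj s)) (mink (ξj - ξi) (γj t - γi t)) t := by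
  refine (hdi.mink hdj).neg.congr_deriv ?_
  have hi := mink_eq_zero_of_hasDerivAt_of_inH2 hγi hdi
  have hj := mink_eq_zero_of_hasDerivAt_of_inH2 hγj hdj
  rw [mink_sub_left, mink_sub_right, mink_sub_right, mink_comm ξj (γj t), mink_comm ξj (γi t),
    mink_comm ξi (γi t)]
  linarith

/-- Lemma 3.3 (hyperbolic case): a tangent vector field on the two endpoints of a hyperbolic
edge induces a discretely conformal (vertex scaling) change of the edge length with
conformal factors `u_i, u_j` iff
`⟨ξ_j − ξ_i, p_j − p_i⟩_M = ((u_i + u_j)/2)·⟨p_j − p_i, p_j − p_i⟩_M`. -/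
theorem hyp_discrete_conformal_char
    (γi γj : ℝ → Fin 3 → ℝ)
    (hγi : ∀ t, inH2 (γi t)) (hγj : ∀ t, inH2 (γj t))
    (ξi ξj : Fin 3 → ℝ)
    (hdi : HasDerivAt γi ξi 0) (hdj : HasDerivAt γj ξj 0)
    (hne : γi 0 ≠ γj 0)
    (ui uj : ℝ) :
    HasDerivAt (fun t => arcosh (-(mink (γi t) (γj t))))
        ((ui + uj) * Real.tanh (arcosh (-(mink (γi 0) (γj 0))) / 2)) 0 ↔
      mink (ξj - ξi) (γj 0 - γi 0)
        = ((ui + uj) / 2) * mink (γj 0 - γi 0) (γj 0 - γi 0) := by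
  rw [arcosh_eq_real_arcosh, mink_sub_self_of_inH2 (hγi 0) (hγj 0)]
  set c := -mink (γi 0) (γj 0)
  set c' := mink (ξj - ξi) (γj 0 - γi 0)
  have hc : 1 < c := one_lt_neg_mink_of_inH2 (hγi 0) (hγj 0) hne
  have hs : √(c ^ 2 - 1) ≠ 0 := (Real.sqrt_pos.mpr (by nlinarith)).ne'
  have hlen : HasDerivAt (fun t => Real.arcosh (-mink (γi t) (γj t))) (c' / √(c ^ 2 - 1)) 0 := by
    rw [div_eq_inv_mul]
    exact HasDerivAt.comp (h₂ := Real.arcosh) 0 (Real.hasDerivAt_arcosh hc)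
      (hasDerivAt_neg_mink_of_inH2 hγi hγj hdi hdj)
  rw [Real.tanh_half_arcosh hc.le, ← mul_div_assoc]
  constructor
  · intro h
    have hc' := (div_left_inj' hs).mp (h.unique hlen)
    linarith
  · intro h
    convert hlen using 2
    rw [h]
    ring
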